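/- arXiv:1607.04459 — 3 statements merged into one kernel-verified Lean document; each statement's English description precedes it below -/
import Mathlib

section
/- Let t be a labeled tree in which every node has at most i children, where i ≥ 1. If at every node the children are processed in order of nondecreasing dimension, then the stack requirement of t satisfies S(t) ≤ (i − 1)·dim(t) + 1. -/
/-- A labeled tree: a node carries a label and a (possibly empty) list of children. -/
inductive LTree (L : Type) : Type where
  | node : L → List (LTree L) → LTree L

namespace LTree

/-- The tree dimension: `0` for a leaf; otherwise the maximum `m` of the children's
dimensions if exactly one child attains `m`, and `m + 1` otherwise. -/
def dim {L : Type} : LTree L → ℕ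
  | node _ ts =>
    let ds := ts.attach.map fun x => dim x.1
    if ds = [] then 0
    else
      let m := ds.foldr max 0
      if ds.count m = 1 then m else m + 1
termination_by t => sizeOf t
decreasing_by
  have := List.sizeOf_lt_of_mem x.2
  simp_wf
  omega

/-- The stack requirement of a tree whose children are processed left-to-right
(i.e. the processing order at each node is the order of the children list):
`S(t) = 1` for a leaf, and `S(t) = max_{1 ≤ j ≤ r} (S(t_j) + (r − j))` otherwise
(here realised with 0-based indices, so the summand is `r - 1 - j`). -/
def stackReq {L : Type} : LTree L → ℕ
  | node _ ts =>
    if ts.isEmpty then 1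
    else (ts.attach.zipIdx.map fun p => stackReq p.1.1 + (ts.length - 1 - p.2)).foldr max 0
termination_by t => sizeOf t
decreasing_by
  have := List.sizeOf_lt_of_mem p.1.2
  simp_wf
  omega

/-- Every node of the tree has at most `i` children. -/
def MaxChildren {L : Type} (i : ℕ) : LTree L → Prop
  | node _ ts => ts.length ≤ i ∧ ∀ t ∈ ts, MaxChildren i t
termination_by t => sizeOf t
decreasing_by
  have := List.sizeOf_lt_of_mem (by assumption : t ∈ ts)
  simp_wf
  omega

/-- At every node, the children (in the order in which they are processed) appear in
order of nondecreasing dimension. -/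
def SortedByDim {L : Type} : LTree L → Prop
  | node _ ts => ts.Pairwise (fun a b => dim a ≤ dim b) ∧ ∀ t ∈ ts, SortedByDim t
termination_by t => sizeOf t
decreasing_by
  have := List.sizeOf_lt_of_mem (by assumption : t ∈ ts)
  simp_wf
  omega

end LTree

/-!
Sorting the children by dimension makes every child other than the last one have dimension
strictly below `dim t`: it is either below the maximal child dimension, or it ties with a later
child at the maximum, and two children attaining the maximum raise `dim t` above it. So the
`r - 1 - j ≤ i - 1` goals waiting above child `j` are paid for by the drop of one dimension, and
the last child, with nothing waiting above it, is bounded by induction alone.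
-/

namespace LTree

variable {L : Type}

@[elab_as_elim]
theorem induction_on {motive : LTree L → Prop} (t : LTree L)
    (node : ∀ c ts, (∀ s ∈ ts, motive s) → motive (node c ts)) : motive t :=
  match t with
  | .node c ts => node c ts fun s _ => induction_on s node
termination_by sizeOf t
decreasing_by
  have := List.sizeOf_lt_of_mem ‹s ∈ ts›
  simp_wf
  omega

theorem dim_node (c : L) (ts : List (LTree L)) :
    dim (node c ts) =
      if ts = [] then 0
      else if (ts.map dim).count ((ts.map dim).foldr max 0) = 1 then (ts.map dim).foldr max 0
      else (ts.map dim).foldr max 0 + 1 := by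
  rw [dim]
  simp [List.attach_map_val (l := ts) (f := dim)]

theorem foldr_max_dim_le_dim_node (c : L) (ts : List (LTree L)) :
    (ts.map dim).foldr max 0 ≤ dim (node c ts) := by
  rw [dim_node]
  split_ifs <;> simp_all

theorem dim_le_dim_node (c : L) {ts : List (LTree L)} {s : LTree L} (hs : s ∈ ts) :
    dim s ≤ dim (node c ts) :=
  (List.le_max_of_le' 0 (List.mem_map_of_mem hs) le_rfl).trans (foldr_max_dim_le_dim_node c ts)

theorem dim_lt_dim_node (c : L) {ts : List (LTree L)} {j k : ℕ} (hjk : j < k) (hk : k < ts.length)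
    (h : dim ts[j] ≤ dim ts[k]) : dim ts[j] < dim (node c ts) := by
  set M := (ts.map dim).foldr max 0 with hM
  have hkM : dim ts[k] ≤ M :=
    List.le_max_of_le' 0 (List.mem_map_of_mem (List.getElem_mem hk)) le_rfl
  rcases (h.trans hkM).lt_or_eq with hlt | heq
  · exact hlt.trans_le (foldr_max_dim_le_dim_node c ts)
  · have heq' : dim ts[k] = M := le_antisymm hkM (heq ▸ h)
    have hcount : 2 ≤ (ts.map dim).count M :=
      List.duplicate_iff_two_le_count.1 (List.duplicate_iff_exists_distinct_get.2
        ⟨⟨j, by simp; omega⟩, ⟨k, by simpa⟩, hjk, by simp [heq], by simp [heq']⟩)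
    have hne : ts ≠ [] := List.ne_nil_of_length_pos (by omega)
    rw [dim_node, ← hM, if_neg hne, if_neg (by omega)]
    omega

theorem stackReq_node_le (c : L) {ts : List (LTree L)} {B : ℕ} (hB : 1 ≤ B)
    (h : ∀ j (hj : j < ts.length), stackReq ts[j] + (ts.length - 1 - j) ≤ B) :
    stackReq (node c ts) ≤ B := by
  rw [stackReq]
  split_ifs
  · exact hB
  refine List.max_le_of_forall_le _ _ fun x hx => ?_
  simp only [List.mem_map, List.mem_zipIdx_iff_getElem?, List.getElem?_eq_some_iff] at hx
  obtain ⟨⟨s, j⟩, ⟨hj, hs⟩, rfl⟩ := hx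
  rw [← hs]
  simpa using h j (by simpa using hj)

end LTree

theorem stackReq_le_general {L : Type} (i : ℕ) (t : LTree L)
    (hmax : t.MaxChildren i) (hsorted : t.SortedByDim) :
    t.stackReq ≤ (i - 1) * t.dim + 1 := by
  induction t using LTree.induction_on with
  | node c ts ih =>
  rw [LTree.MaxChildren] at hmax
  rw [LTree.SortedByDim] at hsorted
  refine LTree.stackReq_node_le c le_add_self fun j hj => ?_
  have hmem : ts[j] ∈ ts := List.getElem_mem hj
  have ih_j := ih _ hmem (hmax.2 _ hmem) (hsorted.2 _ hmem)
  rcases lt_or_ge (j + 1) ts.length with hnext | hlast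
  · have hlt : ts[j].dim < (LTree.node c ts).dim := LTree.dim_lt_dim_node c j.lt_add_one hnext
      (List.pairwise_iff_getElem.1 hsorted.1 j (j + 1) hj hnext j.lt_add_one)
    calc ts[j].stackReq + (ts.length - 1 - j)
        ≤ (i - 1) * ts[j].dim + 1 + (i - 1) := by omega
      _ = (i - 1) * (ts[j].dim + 1) + 1 := by ring
      _ ≤ (i - 1) * (LTree.node c ts).dim + 1 := by gcongr; exact hlt
  · calc ts[j].stackReq + (ts.length - 1 - j)
        ≤ (i - 1) * ts[j].dim + 1 := by omega
      _ ≤ (i - 1) * (LTree.node c ts).dim + 1 := by gcongr; exact LTree.dim_le_dim_node c hmem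

/-- Let `t` be a labeled tree in which every node has at most `i` children, where
`i ≥ 1`. If at every node the children are processed in order of nondecreasing
dimension, then the stack requirement of `t` satisfies `S(t) ≤ (i − 1)·dim(t) + 1`. -/
theorem stackReq_le {L : Type} (i : ℕ) (hi : 1 ≤ i) (t : LTree L)
    (hmax : t.MaxChildren i) (hsorted : t.SortedByDim) :
    t.stackReq ≤ (i - 1) * t.dim + 1 :=
  stackReq_le_general i t hmax hsorted
end

section
/- Let Q be a ground Horn program and k ∈ ℕ. If an annotated atom (p^{=d}, a) or (p^{≤d}, a) (with 0 ≤ d ≤ k) is derivable in Q^{≤k}, then the atom (p, a) is derivable in Q. In particular, if a distinguished atom representing false is derivable in Q^{≤k} in annotated form, then it is derivable in Q. -/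
/-- A ground atom: a predicate symbol together with an argument tuple. -/
abbrev GAtom (P A : Type) := P × A

/-- A ground Horn rule: a head atom together with a finite list of body atoms. -/
abbrev GRule (P A : Type) := GAtom P A × List (GAtom P A)

/-- Annotated predicate symbols: `eq p d` stands for `p^{=d}` and `le p d` for `p^{≤d}`. -/
inductive Ann (P : Type) : Type where
  | eq (p : P) (d : ℕ)
  | le (p : P) (d : ℕ)

/-- The at-most-`k`-dimension program `Q^{≤k}` of a ground Horn program `Q`. -/
def kdim {P A : Type} (Q : Set (GRule P A)) (k : ℕ) : Set (GRule (Ann P) A) :=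
  { R |
    -- (1) facts
    (∃ p a, ((p, a), ([] : List (GAtom P A))) ∈ Q ∧ R = ((Ann.eq p 0, a), [])) ∨
    -- (1) linear rules
    (∃ p a q b d, d ≤ k ∧ ((p, a), [(q, b)]) ∈ Q ∧
      R = ((Ann.eq p d, a), [(Ann.eq q d, b)])) ∨
    -- (2a)
    (∃ p a B d j, ((p, a), B) ∈ Q ∧ 1 < B.length ∧ 1 ≤ d ∧ d ≤ k ∧ j < B.length ∧
      R = ((Ann.eq p d, a),
        (B.zipIdx.map Prod.swap).map fun x =>
          (if x.1 = j then Ann.eq x.2.1 d else Ann.le x.2.1 (d - 1), x.2.2))) ∨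
    -- (2b)
    (∃ p a B d j₁ j₂, ((p, a), B) ∈ Q ∧ 1 < B.length ∧ 1 ≤ d ∧ d ≤ k ∧
      j₁ < j₂ ∧ j₂ < B.length ∧
      R = ((Ann.eq p d, a),
        (B.zipIdx.map Prod.swap).map fun x =>
          (if x.1 = j₁ ∨ x.1 = j₂ then Ann.eq x.2.1 (d - 1) else Ann.le x.2.1 (d - 1),
            x.2.2))) ∨
    -- (3) ε-rules
    (∃ p a d e, e ≤ d ∧ d ≤ k ∧ R = ((Ann.le p d, a), [(Ann.eq p e, a)])) }

/-- An atom is derivable in a ground Horn program `Q` if it is the head of a rule of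
`Q` all of whose body atoms are derivable. -/
inductive Derivable {P A : Type} (Q : Set (GRule P A)) : GAtom P A → Prop
  | intro (r : GRule P A) (hr : r ∈ Q) (hb : ∀ b ∈ r.2, Derivable Q b) :
      Derivable Q r.1

/-!
Erasing the annotations `=d` and `≤d` maps every rule of `Q^{≤k}` either to a rule of `Q`
(the body lists of the rules (2a) and (2b) erase back to the body of the original rule) or,
for an ε-rule, to the tautology `(p, a) ← (p, a)`. Hence erasure maps derivations in
`Q^{≤k}` to derivations in `Q`.
-/

theorem Derivable.map {P A P' A' : Type} {Q : Set (GRule P A)} {Q' : Set (GRule P' A')}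
    (f : GAtom P A → GAtom P' A')
    (hf : ∀ r ∈ Q, (∀ b ∈ r.2, Derivable Q' (f b)) → Derivable Q' (f r.1))
    {x : GAtom P A} (h : Derivable Q x) : Derivable Q' (f x) := by
  induction h with
  | intro r hr _ ih => exact hf r hr ih

theorem Derivable.of_mem_or_mem_body {P A : Type} {Q : Set (GRule P A)} {r : GRule P A}
    (hr : r ∈ Q ∨ r.1 ∈ r.2) (hb : ∀ b ∈ r.2, Derivable Q b) : Derivable Q r.1 :=
  hr.elim (fun hr => Derivable.intro r hr hb) (hb r.1)

def Ann.erase {P : Type} : Ann P → P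
  | eq p _ => p
  | le p _ => p

abbrev eraseAnn {P A : Type} : GAtom (Ann P) A → GAtom P A := Prod.map Ann.erase id

theorem map_eraseAnn_map_zipIdx {P A : Type} (B : List (GAtom P A))
    (f : ℕ × GAtom P A → GAtom (Ann P) A) (hf : ∀ x, eraseAnn (f x) = x.2) :
    ((B.zipIdx.map Prod.swap).map f).map eraseAnn = B := by
  simp [Function.comp_def, hf]

theorem eraseAnn_mem_or_mem_body_of_mem_kdim {P A : Type} {Q : Set (GRule P A)} {k : ℕ}
    {r : GRule (Ann P) A} (hr : r ∈ kdim Q k) :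
    (eraseAnn r.1, r.2.map eraseAnn) ∈ Q ∨ eraseAnn r.1 ∈ r.2.map eraseAnn := by
  rcases hr with ⟨p, a, hQ, rfl⟩ | ⟨p, a, q, b, d, -, hQ, rfl⟩ |
    ⟨p, a, B, d, j, hQ, -, -, -, -, rfl⟩ | ⟨p, a, B, d, j₁, j₂, hQ, -, -, -, -, -, rfl⟩ |
    ⟨p, a, d, e, -, -, rfl⟩
  · exact Or.inl hQ
  · exact Or.inl hQ
  · left
    dsimp only
    rwa [map_eraseAnn_map_zipIdx]
    intro x
    split_ifs <;> rfl
  · left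
    dsimp only
    rwa [map_eraseAnn_map_zipIdx]
    intro x
    split_ifs <;> rfl
  · exact Or.inr (List.mem_singleton_self _)

theorem Derivable.eraseAnn_of_kdim {P A : Type} {Q : Set (GRule P A)} {k : ℕ}
    {x : GAtom (Ann P) A} (h : Derivable (kdim Q k) x) : Derivable Q (eraseAnn x) :=
  h.map eraseAnn fun _ hr hb =>
    Derivable.of_mem_or_mem_body (eraseAnn_mem_or_mem_body_of_mem_kdim hr)
      (List.forall_mem_map.2 hb)

theorem derivable_of_derivable_kdim_general {P A : Type} (Q : Set (GRule P A)) (k : ℕ)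
    (p : P) (a : A) (d : ℕ)
    (h : Derivable (kdim Q k) (Ann.eq p d, a) ∨ Derivable (kdim Q k) (Ann.le p d, a)) :
    Derivable Q (p, a) :=
  h.elim Derivable.eraseAnn_of_kdim Derivable.eraseAnn_of_kdim

/-- If an annotated atom `(p^{=d}, a)` or `(p^{≤d}, a)` (with `0 ≤ d ≤ k`) is
derivable in `Q^{≤k}`, then the atom `(p, a)` is derivable in `Q`.  In particular,
taking `(p, a)` to be a distinguished atom representing `false`: if it is derivable
in `Q^{≤k}` in annotated form, then it is derivable in `Q`. -/
theorem derivable_of_derivable_kdim {P A : Type} (Q : Set (GRule P A)) (k : ℕ)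
    (p : P) (a : A) (d : ℕ) (hd : d ≤ k)
    (h : Derivable (kdim Q k) (Ann.eq p d, a) ∨ Derivable (kdim Q k) (Ann.le p d, a)) :
    Derivable Q (p, a) :=
  derivable_of_derivable_kdim_general Q k p a d h
end

section
/- Let Q be a ground Horn program in which every rule has at most i body atoms, where i ≥ 1. If an atom h has a derivation tree in Q of dimension at most k, then there is a sequence of steps of the goal-stack machine for Q from the state [h] to the empty state [] in which every intermediate state has length at most (i − 1)·k + 1. -/
/-- `IsDeriv Q h T` : `T` is a derivation tree for the atom `h` in `Q`: its root label
is a rule `(h, [b₁,…,b_r]) ∈ Q` and its `r` children are derivation trees for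
`b₁,…,b_r` in `Q`, respectively. -/
inductive IsDeriv {P A : Type} (Q : Set (GRule P A)) :
    GAtom P A → LTree (GRule P A) → Prop
  | node (r : GRule P A) (ts : List (LTree (GRule P A))) :
      r ∈ Q → List.Forall₂ (IsDeriv Q) r.2 ts → IsDeriv Q r.1 (.node r ts)

/-- A step of the goal-stack machine for `Q`: from a state `h :: G`, for any rule
`(h, B) ∈ Q` and any permutation `B'` of `B`, it may step to the state `B' ++ G`. -/
inductive Step {P A : Type} (Q : Set (GRule P A)) :
    List (GAtom P A) → List (GAtom P A) → Prop
  | mk (h : GAtom P A) (G B B' : List (GAtom P A)) :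
      (h, B) ∈ Q → B.Perm B' → Step Q (h :: G) (B' ++ G)

/-!
Induction on the derivation tree `T`: to discharge `h` on top of a stack `G`, expand `h` by the
root rule and order its body so that a child of maximal dimension is solved last. By the
definition of dimension every other child has dimension at most `dim T - 1`, and while it is
solved at most `i - 1` siblings wait on the stack, so the stack stays within
`(i - 1) (dim T - 1) + 1 + (i - 1) + |G| = (i - 1) dim T + 1 + |G|`; the last child is solved
with no sibling left.
-/

open Relation

def nodeDim (ds : List ℕ) : ℕ :=
  if ds = [] then 0
  else
    let m := ds.foldr max 0
    if ds.count m = 1 then m else m + 1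

theorem LTree.dim_node_s14 {L : Type} (l : L) (ts : List (LTree L)) :
    (LTree.node l ts).dim = nodeDim (ts.map LTree.dim) := by
  rw [LTree.dim, List.attach_map_val, nodeDim]

theorem exists_perm_append_lt_nodeDim {β : Type} (l : List β) (f : β → ℕ) :
    ∃ e rest, l.Perm (e ++ rest) ∧ rest.length ≤ 1 ∧
      (∀ y ∈ e, f y < nodeDim (l.map f)) ∧ ∀ y ∈ rest, f y ≤ nodeDim (l.map f) := by
  classical
  rcases eq_or_ne l [] with rfl | hl
  · exact ⟨[], [], by simp⟩
  set m := (l.map f).foldr max 0 with hm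
  have hle_max : ∀ y ∈ l, f y ≤ m := fun y hy =>
    List.le_max_of_le' 0 (List.mem_map_of_mem hy) le_rfl
  obtain ⟨x, hx, hxm⟩ : ∃ x ∈ l, f x = m :=
    List.mem_map.1 (List.maximum_mem (List.foldr_max_of_ne_nil (by simpa using hl)).symm)
  have hperm : l.Perm (l.erase x ++ [x]) :=
    (List.perm_cons_erase hx).trans (List.perm_append_singleton _ _).symm
  refine ⟨l.erase x, [x], hperm, le_rfl, ?_⟩
  have hdim : nodeDim (l.map f) = if (l.map f).count m = 1 then m else m + 1 := by
    simp [nodeDim, hl, hm]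
  split_ifs at hdim with hcount
  · have hcount' : ((l.erase x).map f).count m = 0 := by
      have := ((hperm.map f).count_eq m).symm.trans hcount
      simp [hxm] at this
      omega
    have hm_notMem : m ∉ (l.erase x).map f := List.count_eq_zero.1 hcount'
    refine ⟨fun y hy => hdim ▸ (hle_max y (List.mem_of_mem_erase hy)).lt_of_ne fun hy' =>
      hm_notMem (hy' ▸ List.mem_map_of_mem hy), by simp [hdim, hxm]⟩
  · exact ⟨fun y hy => by have := hle_max y (List.mem_of_mem_erase hy); omega,
      by simp [hdim, hxm]⟩

section Runs

variable {P A : Type} (Q : Set (GRule P A))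

def BoundedStep (n : ℕ) (s t : List (GAtom P A)) : Prop :=
  Step Q s t ∧ s.length ≤ n

variable {Q}

theorem reflTransGen_boundedStep_map_append {β : Type} (goal : β → GAtom P A) (b : β → ℕ)
    (G : List (GAtom P A)) (n : ℕ) :
    ∀ e : List β, (∀ y ∈ e, ∀ G n, b y + G.length ≤ n →
      ReflTransGen (BoundedStep Q n) (goal y :: G) G) →
    (∀ y ∈ e, b y + e.length + G.length ≤ n + 1) →
      ReflTransGen (BoundedStep Q n) (e.map goal ++ G) G
  | [], _, _ => .refl
  | y :: e, hrun, he => by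
    have hy := he y List.mem_cons_self
    refine .trans (hrun y List.mem_cons_self _ n ?_)
      (reflTransGen_boundedStep_map_append goal b G n e
        (fun z hz => hrun z (List.mem_cons_of_mem _ hz)) fun z hz => ?_)
    · simp only [List.append_eq, List.length_cons, List.length_append, List.length_map] at hy ⊢
      omega
    · have := he z (List.mem_cons_of_mem _ hz)
      simp only [List.length_cons] at this
      omega

theorem exists_isChain_of_reflTransGen_boundedStep {n : ℕ} {s t : List (GAtom P A)}
    (hst : ReflTransGen (BoundedStep Q n) s t) (ht : t.length ≤ n) :
    ∃ L : List (List (GAtom P A)), L.IsChain (Step Q) ∧ L.head? = some s ∧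
      L.getLast? = some t ∧ ∀ x ∈ L, x.length ≤ n := by
  obtain ⟨L, hL, hchain, hhead, hlast⟩ := List.exists_isChain_ne_nil_of_relationReflTransGen hst
  refine ⟨L, hchain.imp fun _ _ h => h.1, by simp [List.head?_eq_some_head hL, hhead],
    by simp [List.getLast?_eq_some_getLast hL, hlast], ?_⟩
  have hrev : L.reverse.IsChain (fun x y => BoundedStep Q n y x) :=
    List.isChain_reverse.2 hchain
  intro x hx
  refine hrev.induction (fun x => x.length ≤ n) _ (fun _ _ h _ => h.2) (fun _ => ?_) x
    (List.mem_reverse.2 hx)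
  rwa [List.head_reverse, hlast]

end Runs

section Derivations

variable {P A : Type} {Q : Set (GRule P A)} {i : ℕ}

theorem IsDeriv.reflTransGen_boundedStep (hQ : ∀ r ∈ Q, r.2.length ≤ i) :
    ∀ (T : LTree (GRule P A)) {h : GAtom P A}, IsDeriv Q h T →
      ∀ (G : List (GAtom P A)) (n : ℕ), (i - 1) * T.dim + 1 + G.length ≤ n →
        ReflTransGen (BoundedStep Q n) (h :: G) G
  | .node r ts, _, hd, G, n, hn => by
    obtain ⟨_, _, hr, hF⟩ := hd
    set l := r.2.zip ts
    have hfst : l.map Prod.fst = r.2 := List.map_fst_zip hF.length_eq.le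
    have hsnd : l.map Prod.snd = ts := List.map_snd_zip hF.length_eq.ge
    have hrun : ∀ p ∈ l, ∀ G n, (i - 1) * p.2.dim + 1 + G.length ≤ n →
        ReflTransGen (BoundedStep Q n) (p.1 :: G) G := fun p hp =>
      IsDeriv.reflTransGen_boundedStep hQ p.2 ((List.forall₂_iff_zip.1 hF).2 hp)
    obtain ⟨e, rest, hperm, hrest, he, hrest'⟩ := exists_perm_append_lt_nodeDim l (·.2.dim)
    have hdim : nodeDim (l.map (·.2.dim)) = (LTree.node r ts).dim := by
      rw [LTree.dim_node_s14, ← hsnd, List.map_map]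
      rfl
    rw [hdim] at he hrest'
    have hlen : e.length + rest.length ≤ i := by
      simpa [← List.length_append, ← hperm.length_eq, ← hfst] using hQ r hr
    have hstep : BoundedStep Q n (r.1 :: G) (e.map Prod.fst ++ (rest.map Prod.fst ++ G)) := by
      refine ⟨?_, by simp only [List.length_cons] at hn ⊢; omega⟩
      rw [← List.append_assoc, ← List.map_append]
      exact Step.mk _ G _ _ hr (hfst ▸ hperm.map Prod.fst)
    refine .head hstep (.trans (reflTransGen_boundedStep_map_append _ _ _ n e
      (fun p hp => hrun p (hperm.mem_iff.2 (List.mem_append_left _ hp))) fun p hp => ?_)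
      (reflTransGen_boundedStep_map_append _ _ _ n rest
      (fun p hp => hrun p (hperm.mem_iff.2 (List.mem_append_right _ hp))) fun p hp => ?_))
    · have : (i - 1) * (p.2.dim + 1) ≤ (i - 1) * (LTree.node r ts).dim :=
        Nat.mul_le_mul_left _ (he p hp)
      simp only [List.length_append, List.length_map]
      rw [Nat.mul_succ] at this
      omega
    · have : (i - 1) * p.2.dim ≤ (i - 1) * (LTree.node r ts).dim :=
        Nat.mul_le_mul_left _ (hrest' p hp)
      omega
termination_by T => sizeOf T
decreasing_by
  have := List.sizeOf_lt_of_mem (List.of_mem_zip hp).2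
  simp_wf
  omega

end Derivations

theorem goal_stack_bounded_general {P A : Type} (Q : Set (GRule P A)) (i : ℕ)
    (hQ : ∀ r ∈ Q, r.2.length ≤ i) (h : GAtom P A) (k : ℕ)
    (hT : ∃ T : LTree (GRule P A), IsDeriv Q h T ∧ T.dim ≤ k) :
    ∃ L : List (List (GAtom P A)),
      L.Chain' (Step Q) ∧ L.head? = some [h] ∧ L.getLast? = some [] ∧
      ∀ s ∈ L, s.length ≤ (i - 1) * k + 1 := by
  obtain ⟨T, hT, hdim⟩ := hT
  have hrun := hT.reflTransGen_boundedStep hQ T [] ((i - 1) * k + 1) <| by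
    simpa using Nat.mul_le_mul_left (i - 1) hdim
  exact exists_isChain_of_reflTransGen_boundedStep hrun (Nat.zero_le _)

/-- Let `Q` be a ground Horn program in which every rule has at most `i` body atoms,
where `i ≥ 1`. If an atom `h` has a derivation tree in `Q` of dimension at most `k`,
then there is a sequence of steps of the goal-stack machine for `Q` from the state
`[h]` to the empty state `[]` in which every intermediate state has length at most
`(i − 1)·k + 1`. -/
theorem goal_stack_bounded {P A : Type} (Q : Set (GRule P A)) (i : ℕ) (hi : 1 ≤ i)
    (hQ : ∀ r ∈ Q, r.2.length ≤ i) (h : GAtom P A) (k : ℕ)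
    (hT : ∃ T : LTree (GRule P A), IsDeriv Q h T ∧ T.dim ≤ k) :
    ∃ L : List (List (GAtom P A)),
      L.Chain' (Step Q) ∧ L.head? = some [h] ∧ L.getLast? = some [] ∧
      ∀ s ∈ L, s.length ≤ (i - 1) * k + 1 :=
  goal_stack_bounded_general Q i hQ h k hT
end
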